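/- Let H be a Hermitian d×d matrix that is not a real multiple of the identity. Then there exist unitaries U_1, …, U_{d²−1} ∈ U(d) such that the matrices U_j (H − (tr H/d)I) U_j†, j = 1,…,d²−1, are linearly independent over ℝ. -/

import Mathlib

/-!
Conjugating `H₀ = H - t • 1` by `u⋆`, where `u` diagonalises `H`, gives the diagonal matrix of
the shifted eigenvalues, which is not scalar. So the complex span `V` of the unitary orbit of `H₀`
is a unitarily invariant subspace containing a non-scalar diagonal matrix `D`. Subtracting from `D`
its conjugate by a transposition gives `E_kk - E_ll ∈ V`, and `2 × 2` unitaries acting in the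
`(k, l)` plane turn `E_kk - E_ll` into `E_kl`. Hence `V` contains every traceless matrix and
`dim_ℂ V ≥ d² - 1`. A real basis of the real span of the orbit, chosen inside the orbit, also spans
`V` over `ℂ`, so it has at least `d² - 1` elements.
-/

open Matrix Module Submodule

namespace Matrix

section extendUnitary

variable {m n α : Type*} [Fintype m] [DecidableEq n] [CommRing α] [StarRing α]

/-- When `J * Jᴴ = 1`, this acts as `U` on the range of `Jᴴ` and as the identity on its
orthogonal complement. -/
def extendUnitary (J : Matrix m n α) (U : Matrix m m α) : Matrix n n α :=
  Jᴴ * U * J + (1 - Jᴴ * J)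

theorem conjTranspose_extendUnitary (J : Matrix m n α) (U : Matrix m m α) :
    (extendUnitary J U)ᴴ = extendUnitary J Uᴴ := by
  simp [extendUnitary, Matrix.conjTranspose_mul, Matrix.mul_assoc]

variable [Fintype n] [DecidableEq m] {J : Matrix m n α}

theorem mul_one_sub_conjTranspose_mul_self (hJ : J * Jᴴ = 1) : J * (1 - Jᴴ * J) = 0 := by
  rw [Matrix.mul_sub, Matrix.mul_one, ← Matrix.mul_assoc, hJ, Matrix.one_mul, sub_self]

theorem one_sub_conjTranspose_mul_self_mul (hJ : J * Jᴴ = 1) : (1 - Jᴴ * J) * Jᴴ = 0 := by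
  rw [Matrix.sub_mul, Matrix.one_mul, Matrix.mul_assoc, hJ, Matrix.mul_one, sub_self]

theorem extendUnitary_mul_conjTranspose_mul (hJ : J * Jᴴ = 1) (U X : Matrix m m α) :
    extendUnitary J U * (Jᴴ * X * J) = Jᴴ * (U * X) * J := by
  simp only [extendUnitary, Matrix.add_mul, Matrix.mul_assoc]
  rw [← Matrix.mul_assoc J Jᴴ, hJ, Matrix.one_mul, ← Matrix.mul_assoc (1 - _) Jᴴ,
    one_sub_conjTranspose_mul_self_mul hJ, Matrix.zero_mul, add_zero]

theorem conjTranspose_mul_mul_extendUnitary (hJ : J * Jᴴ = 1) (U X : Matrix m m α) :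
    Jᴴ * X * J * extendUnitary J U = Jᴴ * (X * U) * J := by
  simp only [extendUnitary, Matrix.mul_add, ← Matrix.mul_assoc]
  rw [Matrix.mul_assoc _ J Jᴴ, hJ, Matrix.mul_one, Matrix.mul_assoc _ J,
    mul_one_sub_conjTranspose_mul_self hJ, Matrix.mul_zero, add_zero]

theorem extendUnitary_conj (hJ : J * Jᴴ = 1) (U X : Matrix m m α) :
    extendUnitary J U * (Jᴴ * X * J) * (extendUnitary J U)ᴴ = Jᴴ * (U * X * Uᴴ) * J := by
  rw [extendUnitary_mul_conjTranspose_mul hJ, conjTranspose_extendUnitary,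
    conjTranspose_mul_mul_extendUnitary hJ]

theorem extendUnitary_mem_unitaryGroup (hJ : J * Jᴴ = 1) {U : Matrix m m α}
    (hU : U ∈ unitaryGroup m α) : extendUnitary J U ∈ unitaryGroup n α := by
  have hP : (1 - Jᴴ * J) * (1 - Jᴴ * J) = 1 - Jᴴ * J := by
    rw [Matrix.mul_sub, Matrix.mul_one, ← Matrix.mul_assoc, one_sub_conjTranspose_mul_self_mul hJ,
      Matrix.zero_mul, sub_zero]
  rw [mem_unitaryGroup_iff, star_eq_conjTranspose]
  calc extendUnitary J U * (extendUnitary J U)ᴴ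
      = extendUnitary J U * (Jᴴ * Uᴴ * J) + extendUnitary J U * (1 - Jᴴ * J) := by
        rw [conjTranspose_extendUnitary, ← Matrix.mul_add]
        rfl
    _ = Jᴴ * J + (1 - Jᴴ * J) := by
        rw [extendUnitary_mul_conjTranspose_mul hJ, ← star_eq_conjTranspose,
          mem_unitaryGroup_iff.mp hU, Matrix.mul_one, extendUnitary, Matrix.add_mul,
          Matrix.mul_assoc, mul_one_sub_conjTranspose_mul_self hJ, Matrix.mul_zero, zero_add, hP]
    _ = 1 := add_sub_cancel _ _

end extendUnitary

section submatrixOne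

variable {m n α : Type*} [DecidableEq n] [CommRing α] [StarRing α]

theorem submatrix_one_mul_conjTranspose [Fintype n] [DecidableEq m] {f : m → n}
    (hf : Function.Injective f) :
    (1 : Matrix n n α).submatrix f id * ((1 : Matrix n n α).submatrix f id)ᴴ = 1 := by
  rw [conjTranspose_submatrix, conjTranspose_one, ← submatrix_mul _ _ _ _ _ Function.bijective_id,
    Matrix.one_mul, submatrix_one _ hf]

theorem submatrix_one_mul_mul_conjTranspose [Fintype n] (f : m → n) (X : Matrix n n α) :
    (1 : Matrix n n α).submatrix f id * X * ((1 : Matrix n n α).submatrix f id)ᴴ =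
      X.submatrix f f := by
  rw [conjTranspose_submatrix, conjTranspose_one, ← submatrix_id_id X,
    ← submatrix_mul _ _ _ _ _ Function.bijective_id,
    ← submatrix_mul _ _ _ _ _ Function.bijective_id, Matrix.one_mul, Matrix.mul_one]
  rfl

theorem conjTranspose_submatrix_one_mul_single_mul [Fintype m] [DecidableEq m] (f : m → n)
    (i j : m) (c : α) :
    ((1 : Matrix n n α).submatrix f id)ᴴ * single i j c * (1 : Matrix n n α).submatrix f id =
      single (f i) (f j) c := by
  ext a b
  simp [Matrix.mul_apply, single_apply, one_apply, ite_and]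
  rw [Finset.sum_eq_single j (fun x _ hx => by simp [Ne.symm hx]) (by simp)]
  simp [eq_comm, ← ite_and, and_comm]

end submatrixOne

theorem diagonal_sub_diagonal_comp_swap {n α : Type*} [DecidableEq n] [CommRing α] (c : n → α)
    (k l : n) :
    diagonal c - diagonal (c ∘ Equiv.swap k l) =
      (c k - c l) • (single k k 1 - single l l 1) := by
  rcases eq_or_ne k l with rfl | hkl
  · simp
  ext a b
  rcases eq_or_ne a b with rfl | hab
  · rcases eq_or_ne a k with rfl | hak
    · simp [hkl.symm]
    rcases eq_or_ne a l with rfl | hal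
    · simp [hkl]
    · simp [Equiv.swap_apply_of_ne_of_ne, hak, hal, hak.symm, hal.symm]
  · have hk : ¬(k = a ∧ k = b) := fun h => hab (h.1.symm.trans h.2)
    have hl : ¬(l = a ∧ l = b) := fun h => hab (h.1.symm.trans h.2)
    simp [hab, hk, hl]

section trace

variable {n K : Type*} [Fintype n] [DecidableEq n] [Field K]

theorem ker_traceLinearMap_le_of_single_mem {V : Submodule K (Matrix n n K)}
    (hdiag : ∀ k l, single k k 1 - single l l 1 ∈ V)
    (hoff : ∀ k l, k ≠ l → single k l 1 ∈ V) :
    LinearMap.ker (traceLinearMap n K K) ≤ V := by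
  intro M hM
  rw [LinearMap.mem_ker, traceLinearMap_apply] at hM
  rcases isEmpty_or_nonempty n with _ | ⟨⟨k₀⟩⟩
  · rw [Subsingleton.elim M 0]
    exact V.zero_mem
  have hM' : M = ∑ a, ∑ b,
      (single a b (M a b) - if a = b then M a a • single k₀ k₀ 1 else 0) := by
    simp only [Finset.sum_sub_distrib, Finset.sum_ite_eq, Finset.mem_univ, if_true,
      ← Finset.sum_smul]
    rw [← matrix_eq_sum_single, show ∑ i, M i i = 0 from hM, zero_smul, sub_zero]
  rw [hM']
  refine sum_mem fun a _ => sum_mem fun b _ => ?_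
  split_ifs with hab
  · subst hab
    have := V.smul_mem (M a a) (hdiag a k₀)
    rwa [smul_sub, smul_single, smul_eq_mul, mul_one] at this
  · rw [sub_zero, ← mul_one (M a b), ← smul_eq_mul, ← smul_single]
    exact V.smul_mem _ (hoff a b hab)

theorem finrank_ker_traceLinearMap [Nonempty n] :
    finrank K (LinearMap.ker (traceLinearMap n K K)) = Fintype.card n ^ 2 - 1 := by
  obtain ⟨k₀⟩ := ‹Nonempty n›
  have hsurj : Function.Surjective (traceLinearMap n K K) :=
    fun c => ⟨single k₀ k₀ c, trace_single_eq_same _ _⟩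
  have := LinearMap.finrank_range_add_finrank_ker (traceLinearMap n K K)
  rw [LinearMap.range_eq_top.2 hsurj, finrank_top, finrank_self, finrank_matrix, finrank_self,
    mul_one, ← sq] at this
  omega

end trace

end Matrix

section unitaryConj

variable {n : Type*} [Fintype n] [DecidableEq n]

def unitaryConjOrbit {α : Type*} [CommRing α] [StarRing α] (A : Matrix n n α) :
    Set (Matrix n n α) :=
  Set.range fun U : unitaryGroup n α => (U : Matrix n n α) * A * star (U : Matrix n n α)

def UnitaryConjInvariant {α : Type*} [CommRing α] [StarRing α]
    (V : Submodule α (Matrix n n α)) : Prop :=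
  ∀ U : unitaryGroup n α, ∀ X ∈ V, (U : Matrix n n α) * X * star (U : Matrix n n α) ∈ V

theorem unitaryConjInvariant_span_unitaryConjOrbit {α : Type*} [CommRing α] [StarRing α]
    (A : Matrix n n α) : UnitaryConjInvariant (span α (unitaryConjOrbit A)) := by
  intro U X hX
  have hle : span α (unitaryConjOrbit A) ≤ (span α (unitaryConjOrbit A)).comap
      (Unitary.conjStarAlgAut α _ U).toAlgEquiv.toLinearMap := by
    rw [span_le]
    rintro _ ⟨W, rfl⟩
    exact subset_span ⟨U * W, by simp [Matrix.mul_assoc]⟩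
  exact hle hX

theorem single_zero_one_mem_span_unitaryConjOrbit :
    single (0 : Fin 2) 1 (1 : ℂ) ∈
      span ℂ (unitaryConjOrbit (single 0 0 1 - single 1 1 1 : Matrix (Fin 2) (Fin 2) ℂ)) := by
  set Z : Matrix (Fin 2) (Fin 2) ℂ := single 0 0 1 - single 1 1 1
  -- `U₁` and `U₂` conjugate `Z` to the Pauli matrices `X` and `-Y`, and `E₀₁ = (X + iY) / 2`.
  let U₁ : unitaryGroup (Fin 2) ℂ :=
    ⟨!![(1 + Complex.I) / 2, (1 + Complex.I) / 2; (1 + Complex.I) / 2, -((1 + Complex.I) / 2)], by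
      rw [mem_unitaryGroup_iff]
      ext i j
      fin_cases i <;> fin_cases j <;> simp [Matrix.mul_apply, map_div₀, map_ofNat] <;>
        ring_nf <;> norm_num⟩
  let U₂ : unitaryGroup (Fin 2) ℂ :=
    ⟨!![(1 + Complex.I) / 2, (1 - Complex.I) / 2; (1 - Complex.I) / 2, (1 + Complex.I) / 2], by
      rw [mem_unitaryGroup_iff]
      ext i j
      fin_cases i <;> fin_cases j <;> simp [Matrix.mul_apply, map_div₀, map_ofNat] <;>
        ring_nf <;> norm_num⟩
  have hE : single 0 1 1 =
      (1 / 2 : ℂ) • ((U₁ : Matrix (Fin 2) (Fin 2) ℂ) * Z * star (U₁ : Matrix (Fin 2) (Fin 2) ℂ)) -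
        (Complex.I / 2) •
          ((U₂ : Matrix (Fin 2) (Fin 2) ℂ) * Z * star (U₂ : Matrix (Fin 2) (Fin 2) ℂ)) := by
    ext i j
    fin_cases i <;> fin_cases j <;>
      simp [U₁, U₂, Z, Matrix.mul_apply, vecMul, dotProduct, single_apply, map_ofNat] <;>
      ring_nf <;> norm_num
  rw [hE]
  exact sub_mem (smul_mem _ _ (subset_span ⟨U₁, rfl⟩)) (smul_mem _ _ (subset_span ⟨U₂, rfl⟩))

namespace UnitaryConjInvariant

theorem single_sub_single_mem_of_apply_ne {K : Type*} [Field K] [StarRing K]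
    {V : Submodule K (Matrix n n K)} (hV : UnitaryConjInvariant V) {c : n → K}
    (hc : diagonal c ∈ V) {k l : n} (hkl : c k ≠ c l) :
    single k k 1 - single l l 1 ∈ V := by
  set P : Matrix n n K := (1 : Matrix n n K).submatrix (Equiv.swap k l) id
  have hP : P ∈ unitaryGroup n K :=
    mem_unitaryGroup_iff.2 (submatrix_one_mul_conjTranspose (Equiv.swap k l).injective)
  have hswap : P * diagonal c * star P = diagonal (c ∘ Equiv.swap k l) := by
    rw [star_eq_conjTranspose, submatrix_one_mul_mul_conjTranspose, submatrix_diagonal_equiv]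
  have hdiff := V.sub_mem hc (hswap ▸ hV ⟨P, hP⟩ _ hc)
  rwa [diagonal_sub_diagonal_comp_swap, V.smul_mem_iff (sub_ne_zero.2 hkl)] at hdiff

theorem single_sub_single_mem {K : Type*} [Field K] [StarRing K]
    {V : Submodule K (Matrix n n K)} (hV : UnitaryConjInvariant V) {c : n → K}
    (hc : diagonal c ∈ V) (hnc : ∃ i j, c i ≠ c j) (k l : n) :
    single k k 1 - single l l 1 ∈ V := by
  by_cases hkl : c k = c l
  · obtain ⟨j, hj⟩ : ∃ j, c j ≠ c k := by
      obtain ⟨i, i', hii'⟩ := hnc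
      by_contra! h
      exact hii' ((h i).trans (h i').symm)
    have := V.add_mem (hV.single_sub_single_mem_of_apply_ne hc hj.symm)
      (hV.single_sub_single_mem_of_apply_ne hc (hkl ▸ hj))
    rwa [sub_add_sub_cancel] at this
  · exact hV.single_sub_single_mem_of_apply_ne hc hkl

theorem single_mem_of_single_sub_single_mem {V : Submodule ℂ (Matrix n n ℂ)}
    (hV : UnitaryConjInvariant V) {k l : n} (hkl : k ≠ l)
    (h : single k k 1 - single l l 1 ∈ V) : single k l 1 ∈ V := by
  set J : Matrix (Fin 2) n ℂ := (1 : Matrix n n ℂ).submatrix ![k, l] id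
  have hJ : J * Jᴴ = 1 := submatrix_one_mul_conjTranspose <| by
    intro i j
    fin_cases i <;> fin_cases j <;> simp [hkl, hkl.symm]
  have hJsingle (i j : Fin 2) :
      Jᴴ * single i j (1 : ℂ) * J = single (![k, l] i) (![k, l] j) 1 :=
    conjTranspose_submatrix_one_mul_single_mul _ i j 1
  set Z : Matrix (Fin 2) (Fin 2) ℂ := single 0 0 1 - single 1 1 1
  let W : Submodule ℂ (Matrix (Fin 2) (Fin 2) ℂ) :=
    V.comap (mulRightLinearMap n ℂ J ∘ₗ mulLeftLinearMap (Fin 2) ℂ Jᴴ)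
  have hZ : Jᴴ * Z * J ∈ V := by
    simpa [Z, Matrix.mul_sub, Matrix.sub_mul, hJsingle] using h
  have hle : span ℂ (unitaryConjOrbit Z) ≤ W := by
    rw [span_le]
    rintro _ ⟨U, rfl⟩
    have := hV ⟨_, extendUnitary_mem_unitaryGroup hJ U.2⟩ _ hZ
    rwa [star_eq_conjTranspose, extendUnitary_conj hJ, ← star_eq_conjTranspose] at this
  simpa [W, hJsingle] using hle single_zero_one_mem_span_unitaryConjOrbit

theorem ker_traceLinearMap_le {V : Submodule ℂ (Matrix n n ℂ)} (hV : UnitaryConjInvariant V)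
    {c : n → ℂ} (hc : diagonal c ∈ V) (hnc : ∃ i j, c i ≠ c j) :
    LinearMap.ker (traceLinearMap n ℂ ℂ) ≤ V :=
  ker_traceLinearMap_le_of_single_mem (hV.single_sub_single_mem hc hnc) fun k l hkl =>
    hV.single_mem_of_single_sub_single_mem hkl (hV.single_sub_single_mem hc hnc k l)

end UnitaryConjInvariant

end unitaryConj

theorem exists_linearIndependent_of_le_finrank_span (K : Type*) {L M : Type*} [Field K]
    [Field L] [Algebra K L] [AddCommGroup M] [Module K M] [Module L M] [IsScalarTower K L M]
    {S : Set M} {m : ℕ} (hm : m ≤ finrank L (span L S)) :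
    ∃ v : Fin m → M, (∀ i, v i ∈ S) ∧ LinearIndependent K v := by
  obtain ⟨s, hsS, hspan, hli⟩ := exists_linearIndependent K S
  have hle : span L S ≤ span L s := span_le.2 fun x hx =>
    span_le_restrictScalars K L s (hspan ▸ subset_span hx)
  obtain ⟨e⟩ : Nonempty (Fin m ↪ s) := by
    rcases s.finite_or_infinite with hfin | hinf
    · have := hfin.fintype
      have : Module.Finite L (span L s) := FiniteDimensional.span_of_finite L hfin
      refine Function.Embedding.nonempty_of_card_le ?_
      calc Fintype.card (Fin m) = m := Fintype.card_fin m
        _ ≤ finrank L (span L S) := hm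
        _ ≤ finrank L (span L s) := finrank_mono hle
        _ ≤ s.toFinset.card := finrank_span_le_card s
        _ = Fintype.card s := Set.toFinset_card s
    · have := hinf.to_subtype
      exact ⟨Fin.valEmbedding.trans (Infinite.natEmbedding s)⟩
  exact ⟨fun i => e i, fun i => hsS (e i).2, hli.comp e e.injective⟩

namespace Matrix.IsHermitian

variable {n : Type*} [Fintype n] [DecidableEq n]

theorem exists_eigenvalues_ne {𝕜 : Type*} [RCLike 𝕜] {H : Matrix n n 𝕜} (hH : H.IsHermitian)
    (hnI : ∀ c : ℝ, H ≠ (c : 𝕜) • 1) : ∃ i j, hH.eigenvalues i ≠ hH.eigenvalues j := by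
  by_contra! hconst
  rcases isEmpty_or_nonempty n with _ | ⟨⟨i⟩⟩
  · exact hnI 0 (Subsingleton.elim _ _)
  refine hnI (hH.eigenvalues i) ?_
  have hdiag : diagonal (RCLike.ofReal ∘ hH.eigenvalues) =
      (hH.eigenvalues i : 𝕜) • (1 : Matrix n n 𝕜) := by
    rw [smul_one_eq_diagonal]
    congr
    funext j
    simp [hconst j i]
  conv_lhs => rw [hH.spectral_theorem, hdiag, map_smul, map_one]

theorem diagonal_eigenvalues_sub_mem_unitaryConjOrbit {H : Matrix n n ℂ} (hH : H.IsHermitian)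
    (t : ℂ) : diagonal (fun i => (hH.eigenvalues i : ℂ) - t) ∈ unitaryConjOrbit (H - t • 1) :=
  ⟨star hH.eigenvectorUnitary, by
    change Unitary.conjStarAlgAut ℂ _ (star hH.eigenvectorUnitary) (H - t • 1) = _
    rw [map_sub, map_smul, map_one, hH.conjStarAlgAut_star_eigenvectorUnitary,
      smul_one_eq_diagonal, diagonal_sub]
    rfl⟩

end Matrix.IsHermitian

theorem exists_linearIndependent_conjugates (d : ℕ) (H : Matrix (Fin d) (Fin d) ℂ)
    (hH : H.IsHermitian) (hnI : ∀ c : ℝ, H ≠ (c : ℂ) • 1) :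
    ∃ U : Fin (d ^ 2 - 1) → Matrix.unitaryGroup (Fin d) ℂ,
      LinearIndependent ℝ (fun j =>
        (U j : Matrix (Fin d) (Fin d) ℂ) * (H - (H.trace / d) • 1) *
          star (U j : Matrix (Fin d) (Fin d) ℂ)) := by
  obtain ⟨i, j, hij⟩ := hH.exists_eigenvalues_ne hnI
  have : Nonempty (Fin d) := ⟨i⟩
  set t : ℂ := H.trace / d
  have hker : LinearMap.ker (traceLinearMap (Fin d) ℂ ℂ) ≤
      span ℂ (unitaryConjOrbit (H - t • 1)) :=
    (unitaryConjInvariant_span_unitaryConjOrbit _).ker_traceLinearMap_le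
      (subset_span (hH.diagonal_eigenvalues_sub_mem_unitaryConjOrbit t))
      ⟨i, j, by simpa using hij⟩
  have hdim : d ^ 2 - 1 ≤ finrank ℂ (span ℂ (unitaryConjOrbit (H - t • 1))) := by
    simpa [finrank_ker_traceLinearMap] using Submodule.finrank_mono hker
  obtain ⟨v, hv, hli⟩ := exists_linearIndependent_of_le_finrank_span ℝ hdim
  choose U hU using hv
  exact ⟨U, by simpa only [hU] using hli⟩
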